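/- arXiv:1309.6895 — 2 statements merged into one kernel-verified Lean document; each statement's English description precedes it below -/
import Mathlib

section
/- For x ≠ μ fixed, if a sequence of positive definite matrices Σ_m with bounded eigenvalue ratio λ_max(Σ_m)/λ_min(Σ_m) ≤ γ satisfies λ_min(Σ_m) ↘ 0, then the product φ(μ; μ, Σ_m) · φ(x; μ, Σ_m) → 0. -/
open Real Matrix Filter Topology MeasureTheory

/-- smallest eigenvalue (infimum of the spectrum) of a real matrix -/
noncomputable def lamMin {p : ℕ} (A : Matrix (Fin p) (Fin p) ℝ) : ℝ := sInf (spectrum ℝ A)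

/-- largest eigenvalue (supremum of the spectrum) of a real matrix -/
noncomputable def lamMax {p : ℕ} (A : Matrix (Fin p) (Fin p) ℝ) : ℝ := sSup (spectrum ℝ A)

/-- The `p`-dimensional Gaussian density with mean `μ` and covariance matrix `S`. -/
noncomputable def gauss {p : ℕ} (x μ : Fin p → ℝ) (S : Matrix (Fin p) (Fin p) ℝ) : ℝ :=
  (2 * π) ^ (-(p : ℝ) / 2) * S.det ^ (-(1 : ℝ) / 2) *
    Real.exp (-((x - μ) ⬝ᵥ (S⁻¹ *ᵥ (x - μ))) / 2)

/-!
Write `v = x - μ`, `λ = λ_min(Σ)`. Then `φ(μ; μ, Σ) φ(x; μ, Σ) = (2π)^{-p} det(Σ)⁻¹ exp(-v'Σ⁻¹v / 2)`,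
with `det Σ ≥ λ^p` and `v'Σ⁻¹v ≥ |v|² / λ_max(Σ) ≥ |v|² / (γ λ)`. The product is therefore at most
`λ^{-p} exp(-|v|² / (2γλ))`, and the exponential decay beats the polynomial blow-up as `λ → 0⁺`.
-/

lemma tendsto_inv_pow_mul_exp_neg_div_nhdsGT_zero {a : ℝ} (ha : 0 < a) (k : ℕ) :
    Tendsto (fun t => (t ^ k)⁻¹ * exp (-(a / t))) (𝓝[>] 0) (𝓝 0) := by
  have hdiv : Tendsto (fun t : ℝ => a / t) (𝓝[>] 0) atTop := by
    simpa only [div_eq_mul_inv] using tendsto_inv_nhdsGT_zero.const_mul_atTop ha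
  have hlim := ((tendsto_pow_mul_exp_neg_atTop_nhds_zero k).comp hdiv).const_mul (a ^ k)⁻¹
  rw [mul_zero] at hlim
  refine hlim.congr' (eventually_nhdsWithin_of_forall fun t _ => ?_)
  simp only [Function.comp_apply, div_pow]
  field_simp

namespace Matrix

variable {n : Type*} [Fintype n] [DecidableEq n] {A : Matrix n n ℝ}

lemma IsHermitian.sInf_spectrum_le_eigenvalues (hA : A.IsHermitian) (i : n) :
    sInf (spectrum ℝ A) ≤ hA.eigenvalues i :=
  csInf_le A.finite_real_spectrum.bddBelow (hA.eigenvalues_mem_spectrum_real i)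

lemma PosDef.pos_of_mem_spectrum (hA : A.PosDef) {x : ℝ} (hx : x ∈ spectrum ℝ A) : 0 < x := by
  obtain ⟨i, rfl⟩ := hA.isHermitian.spectrum_real_eq_range_eigenvalues ▸ hx
  exact hA.eigenvalues_pos i

lemma PosDef.sInf_spectrum_pos [Nonempty n] (hA : A.PosDef) : 0 < sInf (spectrum ℝ A) := by
  have hne : (spectrum ℝ A).Nonempty :=
    ContinuousFunctionalCalculus.spectrum_nonempty A hA.isHermitian.isSelfAdjoint
  exact hA.pos_of_mem_spectrum (hne.csInf_mem A.finite_real_spectrum)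

lemma PosDef.sInf_spectrum_le_sSup_spectrum [Nonempty n] (hA : A.PosDef) :
    sInf (spectrum ℝ A) ≤ sSup (spectrum ℝ A) :=
  csInf_le_csSup (ContinuousFunctionalCalculus.spectrum_nonempty A hA.isHermitian.isSelfAdjoint)
    A.finite_real_spectrum.bddBelow A.finite_real_spectrum.bddAbove

lemma PosDef.sInf_spectrum_pow_card_le_det (hA : A.PosDef) :
    sInf (spectrum ℝ A) ^ Fintype.card n ≤ A.det := by
  have hnonneg : 0 ≤ sInf (spectrum ℝ A) :=
    Real.sInf_nonneg fun _ hx => (hA.pos_of_mem_spectrum hx).le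
  rw [hA.isHermitian.det_eq_prod_eigenvalues, ← Finset.card_univ, ← Finset.prod_const]
  exact Finset.prod_le_prod (fun _ _ => hnonneg)
    fun i _ => hA.isHermitian.sInf_spectrum_le_eigenvalues i

open scoped MatrixOrder in
lemma PosDef.dotProduct_self_div_sSup_spectrum_le (hA : A.PosDef) (v : n → ℝ) :
    v ⬝ᵥ v / sSup (spectrum ℝ A) ≤ v ⬝ᵥ (A⁻¹ *ᵥ v) := by
  -- functional calculus: `A⁻¹ = cfc (·⁻¹) A`, so the Loewner bound is checked on the spectrum
  have hloewner : algebraMap ℝ (Matrix n n ℝ) (sSup (spectrum ℝ A))⁻¹ ≤ A⁻¹ := by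
    rw [nonsing_inv_eq_ringInverse, ← cfc_ringInverse_id (R := ℝ) A hA.isUnit,
      algebraMap_le_cfc_iff _ _ _ (A.finite_real_spectrum.continuousOn _)]
    exact fun x hx => inv_anti₀ (hA.pos_of_mem_spectrum hx)
      (le_csSup A.finite_real_spectrum.bddAbove hx)
  have hquad := (le_iff.mp hloewner).dotProduct_mulVec_nonneg v
  rw [Algebra.algebraMap_eq_smul_one, star_trivial, sub_mulVec, dotProduct_sub, smul_mulVec,
    one_mulVec, dotProduct_smul, smul_eq_mul, sub_nonneg] at hquad
  rwa [div_eq_inv_mul]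

end Matrix

lemma gauss_pos {p : ℕ} {S : Matrix (Fin p) (Fin p) ℝ} (hS : S.PosDef) (x μ : Fin p → ℝ) :
    0 < gauss x μ S :=
  mul_pos (mul_pos (rpow_pos_of_pos (by positivity) _) (rpow_pos_of_pos hS.det_pos _)) (exp_pos _)

lemma gauss_self_mul_gauss_le {p : ℕ} {S : Matrix (Fin p) (Fin p) ℝ} (hS : S.PosDef)
    (x μ : Fin p → ℝ) :
    gauss μ μ S * gauss x μ S ≤ S.det⁻¹ * exp (-((x - μ) ⬝ᵥ (S⁻¹ *ᵥ (x - μ))) / 2) := by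
  have h2π : (1 : ℝ) ≤ 2 * π := by linarith [pi_gt_three]
  have hconst : (2 * π) ^ (-(p : ℝ) / 2) * (2 * π) ^ (-(p : ℝ) / 2) ≤ 1 := by
    rw [← rpow_add (by positivity)]
    exact rpow_le_one_of_one_le_of_nonpos h2π (by linarith [(Nat.cast_nonneg p : (0 : ℝ) ≤ p)])
  have hdet : S.det ^ (-(1 : ℝ) / 2) * S.det ^ (-(1 : ℝ) / 2) = S.det⁻¹ := by
    rw [← rpow_add hS.det_pos]
    norm_num [rpow_neg_one]
  have hsplit : gauss μ μ S * gauss x μ S =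
      ((2 * π) ^ (-(p : ℝ) / 2) * (2 * π) ^ (-(p : ℝ) / 2)) *
        (S.det⁻¹ * exp (-((x - μ) ⬝ᵥ (S⁻¹ *ᵥ (x - μ))) / 2)) := by
    simp only [gauss, sub_self, mulVec_zero, dotProduct_zero, neg_zero, zero_div, exp_zero, ← hdet]
    ring
  rw [hsplit]
  exact mul_le_of_le_one_left (mul_nonneg (inv_nonneg.mpr hS.det_pos.le) (exp_pos _).le) hconst

lemma gauss_self_mul_gauss_le_of_lamMax_le {p : ℕ} [Nonempty (Fin p)]
    {S : Matrix (Fin p) (Fin p) ℝ} (hS : S.PosDef) {γ : ℝ} (hratio : lamMax S ≤ γ * lamMin S)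
    (x μ : Fin p → ℝ) :
    gauss μ μ S * gauss x μ S ≤
      (lamMin S ^ p)⁻¹ * exp (-((x - μ) ⬝ᵥ (x - μ) / (2 * γ) / lamMin S)) := by
  set v := x - μ
  have hmin : 0 < lamMin S := hS.sInf_spectrum_pos
  have hmax : 0 < lamMax S := hmin.trans_le hS.sInf_spectrum_le_sSup_spectrum
  have hdet : lamMin S ^ p ≤ S.det := by
    simpa only [lamMin, Fintype.card_fin] using hS.sInf_spectrum_pow_card_le_det
  have hquad : v ⬝ᵥ v / (2 * γ) / lamMin S ≤ v ⬝ᵥ (S⁻¹ *ᵥ v) / 2 :=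
    calc v ⬝ᵥ v / (2 * γ) / lamMin S = v ⬝ᵥ v / (γ * lamMin S) / 2 := by ring
      _ ≤ v ⬝ᵥ v / lamMax S / 2 := by
          gcongr ?_ / 2
          exact div_le_div_of_nonneg_left (by simpa using dotProduct_self_star_nonneg v) hmax hratio
      _ ≤ v ⬝ᵥ (S⁻¹ *ᵥ v) / 2 := by
          gcongr
          exact hS.dotProduct_self_div_sSup_spectrum_le v
  refine (gauss_self_mul_gauss_le hS x μ).trans (mul_le_mul ?_ ?_ (exp_pos _).le ?_)
  · exact inv_anti₀ (pow_pos hmin p) hdet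
  · rw [exp_le_exp, neg_div]
    exact neg_le_neg hquad
  · exact inv_nonneg.mpr (pow_pos hmin p).le

theorem stmt3_general {p : ℕ} (γ : ℝ)
    (μ x : Fin p → ℝ) (hxμ : x ≠ μ) (S : ℕ → Matrix (Fin p) (Fin p) ℝ)
    (hPD : ∀ m, (S m).PosDef)
    (hratio : ∀ m, lamMax (S m) ≤ γ * lamMin (S m))
    (hto : Tendsto (fun m => lamMin (S m)) atTop (nhds 0)) :
    Tendsto (fun m => gauss μ μ (S m) * gauss x μ (S m)) atTop (nhds 0) := by
  obtain ⟨i, -⟩ := Function.ne_iff.mp hxμ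
  have : Nonempty (Fin p) := ⟨i⟩
  have hγ : 0 < γ := by
    have hmax : 0 < lamMax (S 0) :=
      (hPD 0).sInf_spectrum_pos.trans_le (hPD 0).sInf_spectrum_le_sSup_spectrum
    exact pos_of_mul_pos_left (hmax.trans_le (hratio 0)) (hPD 0).sInf_spectrum_pos.le
  have hv : 0 < (x - μ) ⬝ᵥ (x - μ) := by
    simpa using dotProduct_self_star_pos_iff.mpr (sub_ne_zero.mpr hxμ)
  have hmin : Tendsto (fun m => lamMin (S m)) atTop (𝓝[>] 0) :=
    tendsto_nhdsWithin_of_tendsto_nhds_of_eventually_within _ hto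
      (Eventually.of_forall fun m => (hPD m).sInf_spectrum_pos)
  refine squeeze_zero (fun m => (mul_pos (gauss_pos (hPD m) μ μ) (gauss_pos (hPD m) x μ)).le)
    (fun m => gauss_self_mul_gauss_le_of_lamMax_le (hPD m) (hratio m) x μ) ?_
  exact (tendsto_inv_pow_mul_exp_neg_div_nhdsGT_zero (by positivity) p).comp hmin

/-- for fixed x ≠ μ, if λ_min(Σ_m) ↘ 0 under the eigenratio constraint, then
the product φ(μ; μ, Σ_m) · φ(x; μ, Σ_m) → 0. -/
theorem stmt3 {p : ℕ} (hp : 0 < p) (γ : ℝ) (hγ : 1 ≤ γ)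
    (μ x : Fin p → ℝ) (hxμ : x ≠ μ) (S : ℕ → Matrix (Fin p) (Fin p) ℝ)
    (hPD : ∀ m, (S m).PosDef)
    (hratio : ∀ m, lamMax (S m) ≤ γ * lamMin (S m))
    (hto : Tendsto (fun m => lamMin (S m)) atTop (nhds 0)) :
    Tendsto (fun m => gauss μ μ (S m) * gauss x μ (S m)) atTop (nhds 0) :=
  stmt3_general γ μ x hxμ S hPD hratio hto
end

section
/- Let S be a symmetric positive semidefinite p×p matrix with spectral decomposition S = G L G' where L = diag(l_1,...,l_p). Among all positive definite Σ with spectral decomposition Σ = Γ Λ Γ', the function Σ ↦ tr(Σ^{-1} S) - log det(Σ^{-1}) satisfies tr(Λ^{-1} L) - log det(Λ^{-1}) ≤ tr(Σ^{-1} S) - log det(Σ^{-1}) whenever Γ's columns are the eigenvectors of S matched to the eigenvalue ordering, with equality iff Γ = G (up to eigenvector sign/ordering ambiguity). -/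
/-!
With `U = Γᵀ G` orthogonal, `tr(Σ⁻¹ S) = ∑ᵢⱼ λᵢ⁻¹ Uᵢⱼ² lⱼ`, and the squared entries of an orthogonal
matrix form a doubly stochastic matrix. A linear function on the Birkhoff polytope is minimized at a
permutation matrix, and since `λ⁻¹` and `l` are oppositely ordered, the rearrangement inequality
makes the identity permutation the best one; it is attained when `Γ = G`. The log-determinant terms
agree because conjugation by `Γ` preserves the determinant.
-/

open Matrix

theorem Antivary.dotProduct_le_dotProduct_mulVec {n R : Type*} [Fintype n] [DecidableEq n]
    [Field R] [LinearOrder R] [IsStrictOrderedRing R] {a b : n → R} (hab : Antivary a b)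
    {D : Matrix n n R} (hD : D ∈ doublyStochastic R n) : a ⬝ᵥ b ≤ a ⬝ᵥ (D *ᵥ b) := by
  let f : Matrix n n R →ₗ[R] R :=
    { toFun := fun M => a ⬝ᵥ (M *ᵥ b)
      map_add' := fun M N => by simp only [add_mulVec, dotProduct_add]
      map_smul' := fun c M => by simp only [smul_mulVec, dotProduct_smul, RingHom.id_apply] }
  rw [← SetLike.mem_coe, doublyStochastic_eq_convexHull_permMatrix] at hD
  obtain ⟨_, ⟨σ, rfl⟩, hσ⟩ :=
    (f.concaveOn (convex_convexHull R _)).exists_le_of_mem_convexHull (subset_convexHull R _) hD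
  calc a ⬝ᵥ b ≤ ∑ i, a i * b (σ i) := hab.sum_mul_le_sum_mul_comp_perm
    _ = f (σ.permMatrix R) := by simp [f, permMatrix_mulVec, dotProduct]
    _ ≤ a ⬝ᵥ (D *ᵥ b) := hσ

namespace Matrix

variable {n R : Type*} [Fintype n]

theorem trace_conj_mul_conj [CommSemiring R] (Γ G A B : Matrix n n R) :
    trace (Γ * A * Γᵀ * (G * B * Gᵀ)) = trace (A * (Γᵀ * G) * B * (Γᵀ * G)ᵀ) := by
  rw [transpose_mul, transpose_transpose]
  simp only [Matrix.mul_assoc]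
  rw [trace_mul_comm Γ]
  simp only [Matrix.mul_assoc]

variable [DecidableEq n]

theorem hadamard_self_mem_doublyStochastic [CommRing R] [LinearOrder R] [IsStrictOrderedRing R]
    {U : Matrix n n R} (hU : U * Uᵀ = 1) : U ⊙ U ∈ doublyStochastic R n := by
  have hrow := congr_fun₂ hU
  have hcol := congr_fun₂ (mul_eq_one_comm.mp hU : Uᵀ * U = 1)
  refine mem_doublyStochastic_iff_sum.mpr ⟨fun i j => mul_self_nonneg _, fun i => ?_, fun j => ?_⟩
  · simpa [mul_apply] using hrow i i
  · simpa [mul_apply] using hcol j j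

theorem trace_diagonal_mul_mul_diagonal_mul_transpose [CommSemiring R] (a b : n → R)
    (U : Matrix n n R) :
    trace (diagonal a * U * diagonal b * Uᵀ) = a ⬝ᵥ ((U ⊙ U) *ᵥ b) := by
  simp only [trace, diag, mul_apply, diagonal_apply, dotProduct, mulVec, hadamard,
    transpose_apply, ite_mul, zero_mul, Finset.sum_ite_eq, Finset.mem_univ, if_true, mul_ite,
    mul_zero, Finset.sum_ite_eq', Finset.mul_sum]
  exact Finset.sum_congr rfl fun i _ => Finset.sum_congr rfl fun j _ => by
    simp only [of_apply]; ring

variable [CommRing R] {Γ : Matrix n n R}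

theorem mul_mul_transpose_inv (hΓ : Γ * Γᵀ = 1) (D : Matrix n n R) :
    (Γ * D * Γᵀ)⁻¹ = Γ * D⁻¹ * Γᵀ := by
  rw [Matrix.mul_inv_rev, Matrix.mul_inv_rev, inv_eq_left_inv hΓ, inv_eq_right_inv hΓ,
    Matrix.mul_assoc]

theorem det_mul_mul_transpose (hΓ : Γ * Γᵀ = 1) (D : Matrix n n R) :
    det (Γ * D * Γᵀ) = det D := by
  rw [← inv_eq_right_inv hΓ, det_conj (.of_mul_eq_one _ hΓ)]

end Matrix

theorem stmt7_general {p : ℕ}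
    (S Sig Gm Γ : Matrix (Fin p) (Fin p) ℝ) (L Λ : Fin p → ℝ)
    (hGm : Gm * Gmᵀ = 1)
    (hΓ : Γ * Γᵀ = 1) (hΓ' : Γᵀ * Γ = 1)
    (hSdec : S = Gm * Matrix.diagonal L * Gmᵀ)
    (hSigdec : Sig = Γ * Matrix.diagonal Λ * Γᵀ)
    (hΛ : ∀ i, 0 < Λ i)
    (hLmono : Monotone L) (hΛmono : Monotone Λ) :
    Matrix.trace ((Matrix.diagonal Λ)⁻¹ * Matrix.diagonal L) -
        Real.log ((Matrix.diagonal Λ)⁻¹).det ≤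
      Matrix.trace (Sig⁻¹ * S) - Real.log (Sig⁻¹).det ∧
    (Γ = Gm →
      Matrix.trace ((Matrix.diagonal Λ)⁻¹ * Matrix.diagonal L) -
          Real.log ((Matrix.diagonal Λ)⁻¹).det =
        Matrix.trace (Sig⁻¹ * S) - Real.log (Sig⁻¹).det) := by
  have hΛinv : (diagonal Λ)⁻¹ = diagonal Λ⁻¹ :=
    inv_eq_right_inv (by simp [diagonal_mul_diagonal, fun i => mul_inv_cancel₀ (hΛ i).ne'])
  have hdet : (Sig⁻¹).det = ((diagonal Λ)⁻¹).det := by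
    rw [hSigdec, mul_mul_transpose_inv hΓ, det_mul_mul_transpose hΓ]
  have htrace : trace (Sig⁻¹ * S) = Λ⁻¹ ⬝ᵥ (((Γᵀ * Gm) ⊙ (Γᵀ * Gm)) *ᵥ L) := by
    rw [hSigdec, hSdec, mul_mul_transpose_inv hΓ, hΛinv, trace_conj_mul_conj,
      trace_diagonal_mul_mul_diagonal_mul_transpose]
  have hdiag : trace (diagonal Λ⁻¹ * diagonal L) = Λ⁻¹ ⬝ᵥ L := by
    simp [diagonal_mul_diagonal, dotProduct]
  have hU : Γᵀ * Gm * (Γᵀ * Gm)ᵀ = 1 := by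
    simp only [transpose_mul, transpose_transpose, Matrix.mul_assoc, ← Matrix.mul_assoc Gm, hGm,
      Matrix.one_mul, hΓ']
  have hanti : Antivary Λ⁻¹ L := (antivary_inv_left₀ (show StrongLT 0 Λ from hΛ)).mpr
    (hΛmono.monovary hLmono)
  rw [hdet, htrace, hΛinv, hdiag]
  refine ⟨sub_le_sub_right (hanti.dotProduct_le_dotProduct_mulVec
    (hadamard_self_mem_doublyStochastic hU)) _, ?_⟩
  rintro rfl
  simp [hΓ', hadamard_one]

/-- Theobald-type trace inequality. If S = G L G' (L = diag of eigenvalues,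
G orthogonal) is positive semidefinite and Σ = Γ Λ Γ' is positive definite, with the
eigenvalues in matching (monotone) order, then
tr(Λ⁻¹ L) - log det(Λ⁻¹) ≤ tr(Σ⁻¹ S) - log det(Σ⁻¹), with equality when Γ = G. -/
theorem stmt7 {p : ℕ} (hp : 0 < p)
    (S Sig Gm Γ : Matrix (Fin p) (Fin p) ℝ) (L Λ : Fin p → ℝ)
    (hGm : Gm * Gmᵀ = 1) (hGm' : Gmᵀ * Gm = 1)
    (hΓ : Γ * Γᵀ = 1) (hΓ' : Γᵀ * Γ = 1)
    (hSdec : S = Gm * Matrix.diagonal L * Gmᵀ)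
    (hSigdec : Sig = Γ * Matrix.diagonal Λ * Γᵀ)
    (hL : ∀ i, 0 ≤ L i) (hΛ : ∀ i, 0 < Λ i)
    (hLmono : Monotone L) (hΛmono : Monotone Λ) :
    Matrix.trace ((Matrix.diagonal Λ)⁻¹ * Matrix.diagonal L) -
        Real.log ((Matrix.diagonal Λ)⁻¹).det ≤
      Matrix.trace (Sig⁻¹ * S) - Real.log (Sig⁻¹).det ∧
    (Γ = Gm →
      Matrix.trace ((Matrix.diagonal Λ)⁻¹ * Matrix.diagonal L) -
          Real.log ((Matrix.diagonal Λ)⁻¹).det =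
        Matrix.trace (Sig⁻¹ * S) - Real.log (Sig⁻¹).det) :=
  stmt7_general S Sig Gm Γ L Λ hGm hΓ hΓ' hSdec hSigdec hΛ hLmono hΛmono
end
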